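/- The function μ(θ) = 1/2 + (1/4)|sin θ| cot²θ · log((1+|sin θ|)/(1-|sin θ|)) satisfies 1/2 ≤ μ(θ) ≤ 1 for all θ; moreover μ is decreasing on [0, π/2] and increasing on [π/2, π] (with μ extended by continuity to μ(nπ) = 1). -/

import Mathlib

open Real

/-- The function `μ(θ) = 1/2 + (1/4)|sin θ| cot²θ log((1+|sin θ|)/(1-|sin θ|))`,
extended by continuity to `μ(nπ) = 1`. -/
noncomputable def muBer (θ : ℝ) : ℝ :=
  if Real.sin θ = 0 then 1
  else 1/2 + (1/4) * |Real.sin θ| * (Real.cos θ / Real.sin θ) ^ 2 *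
    Real.log ((1 + |Real.sin θ|) / (1 - |Real.sin θ|))

/-!
Since `log ((1 + s) / (1 - s)) = 2 artanh s` and `cot² θ = (1 - s²) / s²` for `s = |sin θ|`,
we have `μ(θ) = f(|sin θ|)` with `f(s) = 1/2 + (1 - s²) artanh s / (2s)` and `f(0) = 1`.
On `(0, 1)`, `f'(s) = (s - (1 + s²) artanh s) / (2s²) ≤ 0` because `artanh s ≥ s`; at the ends,
`f(s) ≤ 1 = f(0)` amounts to `(1 - s²) artanh s ≤ s`, and `f(s) ≥ 1/2 = f(1)` to `artanh s ≥ 0`.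
So `f` decreases from `1` to `1/2` on `[0, 1]`, while `|sin|` increases on `[0, π/2]` and
`μ(π - θ) = μ(θ)`.
-/

open Set

namespace Real

theorem hasDerivAt_artanh {x : ℝ} (hx : x ∈ Ioo (-1) 1) :
    HasDerivAt artanh (1 - x ^ 2)⁻¹ x := by
  have hp : 0 < 1 + x := by linarith [hx.1]
  have hm : 0 < 1 - x := by linarith [hx.2]
  have hsq : 1 - x ^ 2 ≠ 0 := by nlinarith
  have heq : artanh =ᶠ[nhds x] fun y => 1 / 2 * (log (1 + y) - log (1 - y)) := by
    filter_upwards [isOpen_Ioo.mem_nhds hx] with y hy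
    rw [artanh_eq_half_log (Ioo_subset_Icc_self hy),
      log_div (by linarith [hy.1]) (by linarith [hy.2])]
  have hplus := ((hasDerivAt_id' x).const_add 1).log hp.ne'
  have hminus := ((hasDerivAt_id' x).const_sub 1).log hm.ne'
  refine (((hplus.sub hminus).const_mul (1 / 2)).congr_of_eventuallyEq heq).congr_deriv ?_
  field_simp
  ring

end Real

theorem Convex.monotoneOn_of_hasDerivAt_nonneg {D : Set ℝ} (hD : Convex ℝ D) {f f' : ℝ → ℝ}
    (hf : ∀ x ∈ D, HasDerivAt f (f' x) x) (hf' : ∀ x ∈ interior D, 0 ≤ f' x) :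
    MonotoneOn f D :=
  monotoneOn_of_hasDerivWithinAt_nonneg hD (fun x hx => (hf x hx).continuousAt.continuousWithinAt)
    (fun x hx => (hf x (interior_subset hx)).hasDerivWithinAt) hf'

theorem Convex.antitoneOn_of_hasDerivAt_nonpos {D : Set ℝ} (hD : Convex ℝ D) {f f' : ℝ → ℝ}
    (hf : ∀ x ∈ D, HasDerivAt f (f' x) x) (hf' : ∀ x ∈ interior D, f' x ≤ 0) :
    AntitoneOn f D :=
  antitoneOn_of_hasDerivWithinAt_nonpos hD (fun x hx => (hf x hx).continuousAt.continuousWithinAt)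
    (fun x hx => (hf x (interior_subset hx)).hasDerivWithinAt) hf'

theorem self_le_artanh {s : ℝ} (hs₀ : 0 ≤ s) (hs₁ : s < 1) : s ≤ artanh s := by
  have hmono : MonotoneOn (fun x => artanh x - x) (Ico 0 1) := by
    refine (convex_Ico 0 1).monotoneOn_of_hasDerivAt_nonneg
      (fun x hx => (hasDerivAt_artanh ⟨by linarith [hx.1], hx.2⟩).sub (hasDerivAt_id x)) ?_
    rw [interior_Ico]
    intro x hx
    have hpos : 0 < 1 - x ^ 2 := by nlinarith [hx.1, hx.2]
    have : 1 ≤ (1 - x ^ 2)⁻¹ := (one_le_inv₀ hpos).mpr (by nlinarith)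
    linarith
  simpa [artanh_zero] using hmono ⟨le_rfl, one_pos⟩ ⟨hs₀, hs₁⟩ hs₀

theorem one_sub_sq_mul_artanh_le {s : ℝ} (hs₀ : 0 ≤ s) (hs₁ : s ≤ 1) :
    (1 - s ^ 2) * artanh s ≤ s := by
  rcases hs₁.eq_or_lt with rfl | hs₁
  · simp
  have hmono : MonotoneOn (fun x => x - (1 - x ^ 2) * artanh x) (Ico 0 1) := by
    refine (convex_Ico 0 1).monotoneOn_of_hasDerivAt_nonneg (f' := fun x => 2 * x * artanh x)
      (fun x hx => ?_) ?_
    · have hx' : x ∈ Ioo (-1) 1 := ⟨by linarith [hx.1], hx.2⟩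
      have : 1 - x ^ 2 ≠ 0 := by nlinarith [hx.1, hx.2]
      refine ((hasDerivAt_id' x).sub
        (((hasDerivAt_pow 2 x).const_sub 1).mul (hasDerivAt_artanh hx'))).congr_deriv ?_
      field_simp
      ring
    · rw [interior_Ico]
      exact fun x hx => mul_nonneg (by linarith [hx.1]) (artanh_nonneg hx.1.le)
  simpa [artanh_zero] using hmono ⟨le_rfl, one_pos⟩ ⟨hs₀, hs₁⟩ hs₀

noncomputable def muProfile (s : ℝ) : ℝ :=
  if s = 0 then 1 else 1 / 2 + (1 - s ^ 2) * artanh s / (2 * s)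

theorem muProfile_of_ne_zero {s : ℝ} (hs : s ≠ 0) :
    muProfile s = 1 / 2 + (1 - s ^ 2) * artanh s / (2 * s) :=
  if_neg hs

theorem muProfile_zero : muProfile 0 = 1 := if_pos rfl

theorem muProfile_one : muProfile 1 = 1 / 2 := by norm_num [muProfile]

theorem muProfile_le_one {s : ℝ} (hs₀ : 0 ≤ s) (hs₁ : s ≤ 1) : muProfile s ≤ 1 := by
  rcases hs₀.eq_or_lt with rfl | hpos
  · rw [muProfile_zero]
  rw [muProfile_of_ne_zero hpos.ne']
  have : (1 - s ^ 2) * artanh s / (2 * s) ≤ 1 / 2 := by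
    rw [div_le_iff₀ (by positivity)]
    linarith [one_sub_sq_mul_artanh_le hs₀ hs₁]
  linarith

theorem half_le_muProfile {s : ℝ} (hs₀ : 0 ≤ s) (hs₁ : s ≤ 1) : 1 / 2 ≤ muProfile s := by
  rcases hs₀.eq_or_lt with rfl | hpos
  · norm_num [muProfile_zero]
  rw [muProfile_of_ne_zero hpos.ne', le_add_iff_nonneg_right]
  exact div_nonneg (mul_nonneg (by nlinarith) (artanh_nonneg hs₀)) (by positivity)

theorem hasDerivAt_muProfile {x : ℝ} (hx : x ∈ Ioo 0 1) :
    HasDerivAt muProfile ((x - (1 + x ^ 2) * artanh x) / (2 * x ^ 2)) x := by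
  have hx0 : x ≠ 0 := hx.1.ne'
  have hsq : 1 - x ^ 2 ≠ 0 := by nlinarith [hx.1, hx.2]
  have heq : muProfile =ᶠ[nhds x] fun y => 1 / 2 + (1 - y ^ 2) * artanh y / (2 * y) := by
    filter_upwards [isOpen_Ioo.mem_nhds hx] with y hy
    exact muProfile_of_ne_zero hy.1.ne'
  have hfrac := (((hasDerivAt_pow 2 x).const_sub 1).mul
    (hasDerivAt_artanh ⟨by linarith [hx.1], hx.2⟩)).div ((hasDerivAt_id' x).const_mul 2)
    (by positivity)
  refine ((hfrac.const_add (1 / 2)).congr_of_eventuallyEq heq).congr_deriv ?_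
  simp only [Pi.mul_apply]
  field_simp
  ring

theorem muProfile_antitoneOn : AntitoneOn muProfile (Icc 0 1) := by
  have hIoo : AntitoneOn muProfile (Ioo 0 1) := by
    refine (convex_Ioo 0 1).antitoneOn_of_hasDerivAt_nonpos
      (fun x hx => hasDerivAt_muProfile hx) ?_
    rw [interior_Ioo]
    intro x hx
    have hA := self_le_artanh hx.1.le hx.2
    have hA0 := artanh_nonneg hx.1.le
    exact div_nonpos_of_nonpos_of_nonneg (by nlinarith [sq_nonneg x]) (by positivity)
  intro x hx y hy hxy
  rcases hx.1.eq_or_lt with rfl | hx0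
  · rw [muProfile_zero]
    exact muProfile_le_one hy.1 hy.2
  rcases hy.2.eq_or_lt with rfl | hy1
  · rw [muProfile_one]
    exact half_le_muProfile hx.1 hx.2
  exact hIoo ⟨hx0, hxy.trans_lt hy1⟩ ⟨hx0.trans_le hxy, hy1⟩ hxy

theorem muBer_eq_muProfile (θ : ℝ) : muBer θ = muProfile |sin θ| := by
  by_cases h : sin θ = 0
  · simp [muBer, muProfile, h]
  have hs : |sin θ| ≠ 0 := abs_ne_zero.mpr h
  have hlog : log ((1 + |sin θ|) / (1 - |sin θ|)) = 2 * artanh |sin θ| := by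
    rw [artanh_eq_half_log ⟨by linarith [abs_nonneg (sin θ)], abs_sin_le_one θ⟩]
    ring
  rw [muBer, if_neg h, muProfile_of_ne_zero hs, hlog, div_pow, cos_sq', ← sq_abs (sin θ)]
  field_simp
  ring

theorem muBer_pi_sub (θ : ℝ) : muBer (π - θ) = muBer θ := by
  rw [muBer_eq_muProfile, muBer_eq_muProfile, sin_pi_sub]

theorem muBer_antitoneOn : AntitoneOn muBer (Icc 0 (π / 2)) := by
  intro a ha b hb hab
  have hsin_nonneg {θ : ℝ} (hθ : θ ∈ Icc 0 (π / 2)) : 0 ≤ sin θ :=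
    sin_nonneg_of_nonneg_of_le_pi hθ.1 (by linarith [hθ.2, pi_pos])
  have hsin_le : sin a ≤ sin b :=
    sin_le_sin_of_le_of_le_pi_div_two (by linarith [ha.1, pi_pos]) hb.2 hab
  rw [muBer_eq_muProfile, muBer_eq_muProfile, abs_of_nonneg (hsin_nonneg ha),
    abs_of_nonneg (hsin_nonneg hb)]
  exact muProfile_antitoneOn ⟨hsin_nonneg ha, sin_le_one a⟩ ⟨hsin_nonneg hb, sin_le_one b⟩ hsin_le

theorem muBer_monotoneOn : MonotoneOn muBer (Icc (π / 2) π) := by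
  intro a ha b hb hab
  rw [← muBer_pi_sub a, ← muBer_pi_sub b]
  exact muBer_antitoneOn ⟨by linarith [hb.2], by linarith [hb.1]⟩
    ⟨by linarith [ha.2], by linarith [ha.1]⟩ (by linarith)

/-- `1/2 ≤ μ(θ) ≤ 1` for all `θ`; moreover `μ` is decreasing on `[0, π/2]` and
increasing on `[π/2, π]`. -/
theorem muBer_bounds_and_monotone :
    (∀ θ : ℝ, 1/2 ≤ muBer θ ∧ muBer θ ≤ 1) ∧
    AntitoneOn muBer (Set.Icc 0 (Real.pi / 2)) ∧
    MonotoneOn muBer (Set.Icc (Real.pi / 2) Real.pi) := by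
  refine ⟨fun θ => ?_, muBer_antitoneOn, muBer_monotoneOn⟩
  rw [muBer_eq_muProfile]
  exact ⟨half_le_muProfile (abs_nonneg _) (abs_sin_le_one θ),
    muProfile_le_one (abs_nonneg _) (abs_sin_le_one θ)⟩
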